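/- Let X_t satisfy E[X_t | F_{t−1}] = μ_t and E[X_t² | F_{t−1}] ≤ M almost surely, and let ψ satisfy ψ(x) ≤ log(1 + x + x²/2) for all x ∈ ℝ. Then for any α > 0, almost surely E[ exp(ψ(X_t/α)) | F_{t−1} ] ≤ exp( μ_t/α + M/(2α²) ). -/

import Mathlib

/-!
Since `ψ(x) ≤ log(1 + x + x²/2)` and `1 + x + x²/2 > 0`, we get `exp ψ(x) ≤ 1 + x + x²/2`
pointwise. Taking conditional expectations, which are monotone and linear, bounds
`E[exp ψ(X_t/α) | ℱ_{t-1}]` by `1 + μ_t/α + M/(2α²)`, and `1 + y ≤ exp y` finishes.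
-/

open MeasureTheory

lemma one_add_add_sq_div_two_pos (x : ℝ) : 0 < 1 + x + x ^ 2 / 2 := by
  nlinarith [sq_nonneg (x + 1)]

lemma Real.exp_le_one_add_add_sq_div_two_of_le_log {x y : ℝ}
    (h : y ≤ Real.log (1 + x + x ^ 2 / 2)) : Real.exp y ≤ 1 + x + x ^ 2 / 2 :=
  (Real.le_log_iff_exp_le (one_add_add_sq_div_two_pos x)).mp h

section CondExp

variable {Ω : Type*} {m m0 : MeasurableSpace Ω} {μ : Measure Ω} {f g : Ω → ℝ}

lemma condExp_mono_of_nonneg (hf : 0 ≤ᵐ[μ] f) (hg : Integrable g μ) (hfg : f ≤ᵐ[μ] g) :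
    μ[f|m] ≤ᵐ[μ] μ[g|m] := by
  by_cases hf_int : Integrable f μ
  · exact condExp_mono hf_int hg hfg
  · rw [condExp_of_not_integrable hf_int]
    exact condExp_nonneg (hf.trans hfg)

lemma condExp_const_add_mul_add_mul [IsFiniteMeasure μ] (hm : m ≤ m0)
    (hf : Integrable f μ) (hg : Integrable g μ) (a b c : ℝ) :
    μ[fun ω => a + b * f ω + c * g ω|m] =ᵐ[μ] fun ω => a + b * μ[f|m] ω + c * μ[g|m] ω := by
  have hsum : (fun ω => a + b * f ω + c * g ω) = (fun _ => a) + b • f + c • g := rfl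
  rw [hsum]
  filter_upwards [condExp_add ((integrable_const a).add (hf.smul b)) (hg.smul c) m,
    condExp_add (integrable_const a) (hf.smul b) m, condExp_smul b f m, condExp_smul c g m]
    with ω h_add₁ h_add₂ h_smul_f h_smul_g
  simp only [Pi.add_apply, Pi.smul_apply, smul_eq_mul] at h_add₁ h_add₂ h_smul_f h_smul_g ⊢
  rw [h_add₁, h_add₂, h_smul_f, h_smul_g, condExp_const hm]

end CondExp

theorem catoni_conditional_mgf_upper_bound_general
    {Ω : Type*} {m0 : MeasurableSpace Ω} (P : Measure Ω) [IsProbabilityMeasure P]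
    (ℱ : Filtration ℕ m0) (t : ℕ)
    (X : ℕ → Ω → ℝ) (μt : ℕ → ℝ) (M : ℝ)
    (hInt : Integrable (X t) P)
    (hInt2 : Integrable (fun ω => (X t ω) ^ 2) P)
    (hC1 : P[X t|ℱ (t - 1)] =ᵐ[P] fun _ => μt t)
    (hC2 : ∀ᵐ ω ∂P, (P[fun ω => (X t ω) ^ 2|ℱ (t - 1)]) ω ≤ M)
    (ψ : ℝ → ℝ)
    (hψub : ∀ x : ℝ, ψ x ≤ Real.log (1 + x + x ^ 2 / 2))
    (α : ℝ) :
    ∀ᵐ ω ∂P, (P[fun ω => Real.exp (ψ (X t ω / α))|ℱ (t - 1)]) ω ≤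
      Real.exp (μt t / α + M / (2 * α ^ 2)) := by
  have h_pointwise : ∀ ω, Real.exp (ψ (X t ω / α)) ≤
      1 + α⁻¹ * X t ω + (2 * α ^ 2)⁻¹ * X t ω ^ 2 := fun ω => by
    have h := Real.exp_le_one_add_add_sq_div_two_of_le_log (hψub (X t ω / α))
    convert h using 1
    ring
  have h_quad_int : Integrable (fun ω => 1 + α⁻¹ * X t ω + (2 * α ^ 2)⁻¹ * X t ω ^ 2) P :=
    ((integrable_const 1).add (hInt.const_mul _)).add (hInt2.const_mul _)
  filter_upwards [condExp_mono_of_nonneg (m := ℱ (t - 1))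
      (.of_forall fun ω => (Real.exp_pos _).le) h_quad_int (.of_forall h_pointwise),
    condExp_const_add_mul_add_mul (ℱ.le (t - 1)) hInt hInt2 1 α⁻¹ (2 * α ^ 2)⁻¹, hC1, hC2]
    with ω h_mono h_quad h_mean h_second
  rw [h_quad, h_mean] at h_mono
  have h_second_scaled := mul_le_mul_of_nonneg_left h_second (by positivity : 0 ≤ (2 * α ^ 2)⁻¹)
  calc _ ≤ 1 + α⁻¹ * μt t + (2 * α ^ 2)⁻¹ * M := by linarith
    _ ≤ Real.exp (μt t / α + M / (2 * α ^ 2)) := by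
      rw [div_eq_inv_mul, div_eq_inv_mul]
      linarith [Real.add_one_le_exp (α⁻¹ * μt t + (2 * α ^ 2)⁻¹ * M)]

/-- **Conditional mgf upper bound.** If `E[X_t | ℱ_{t-1}] = μ_t`, `E[X_t² | ℱ_{t-1}] ≤ M` a.s.,
and `ψ(x) ≤ log(1 + x + x²/2)`, then for any `α > 0`, almost surely
`E[exp(ψ(X_t/α)) | ℱ_{t-1}] ≤ exp(μ_t/α + M/(2α²))`. -/
theorem catoni_conditional_mgf_upper_bound
    {Ω : Type*} {m0 : MeasurableSpace Ω} (P : Measure Ω) [IsProbabilityMeasure P]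
    (ℱ : Filtration ℕ m0) (t : ℕ)
    (X : ℕ → Ω → ℝ) (μt : ℕ → ℝ) (M : ℝ) (hM : 0 < M)
    (hAdapted : ∀ s, StronglyMeasurable[ℱ s] (X s))
    (hInt : Integrable (X t) P)
    (hInt2 : Integrable (fun ω => (X t ω) ^ 2) P)
    (hC1 : P[X t|ℱ (t - 1)] =ᵐ[P] fun _ => μt t)
    (hC2 : ∀ᵐ ω ∂P, (P[fun ω => (X t ω) ^ 2|ℱ (t - 1)]) ω ≤ M)
    (ψ : ℝ → ℝ) (hψmeas : Measurable ψ)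
    (hψub : ∀ x : ℝ, ψ x ≤ Real.log (1 + x + x ^ 2 / 2))
    (α : ℝ) (hα : 0 < α) :
    ∀ᵐ ω ∂P, (P[fun ω => Real.exp (ψ (X t ω / α))|ℱ (t - 1)]) ω ≤
      Real.exp (μt t / α + M / (2 * α ^ 2)) :=
  catoni_conditional_mgf_upper_bound_general P ℱ t X μt M hInt hInt2 hC1 hC2 ψ hψub α
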